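/- arXiv:1506.03792 — 2 statements merged into one kernel-verified Lean document; each statement's English description precedes it below -/
import Mathlib

section
/- (Theorem 3, direction 2 ⇒ 1.) Suppose that for every choice of ρ_0,…,ρ_j ∈ {0,…,n} satisfying Σ_{i=0}^{t} ρ_i ≤ k(t+1) for all 0 ≤ t ≤ j and Σ_{i=0}^{j} ρ_i = k(j+1), and for every choice of matrices A*_t ∈ K^{n×ρ_t} of rank ρ_t (0 ≤ t ≤ j), the k(j+1)×k(j+1) matrix G^EX_j · diag(A*_0,…,A*_j) over F is invertible. Then d_R(j) = (n−k)(j+1)+1. -/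
open Matrix

/-- The rank of a vector over the extension field `F`: the `K`-dimension of the
`K`-subspace of `F` spanned by its entries. -/
noncomputable def vrank (K : Type*) [Field K] {F : Type*} [Field F] [Algebra K F]
    {n : ℕ} (x : Fin n → F) : ℕ :=
  Module.finrank K (Submodule.span K (Set.range x))

/-- Channel packet `x_t = ∑_{i=0}^{min(t,m)} s_{t-i} G_i` (with `G i = 0` for `i > m`). -/
noncomputable def packet {F : Type*} [Field F] {k n : ℕ}
    (G : ℕ → Matrix (Fin k) (Fin n) F) (s : ℕ → Fin k → F) (t : ℕ) : Fin n → F :=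
  ∑ i ∈ Finset.range (t + 1), Matrix.vecMul (s (t - i)) (G i)

/-- The `j`-th column sum rank distance. -/
noncomputable def dR (K : Type*) [Field K] {F : Type*} [Field F] [Algebra K F]
    {k n : ℕ} (G : ℕ → Matrix (Fin k) (Fin n) F) (j : ℕ) : ℕ :=
  sInf {d : ℕ | ∃ s : ℕ → Fin k → F, s 0 ≠ 0 ∧
    d = ∑ t ∈ Finset.range (j + 1), vrank K (packet G s t)}

/-- The extended generator matrix `G^EX_j`: block matrix whose `(a,b)` block is
`G_{b−a}` for `a ≤ b` and `0` for `a > b`. -/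
noncomputable def GEX {F : Type*} [Field F] {k n : ℕ}
    (G : ℕ → Matrix (Fin k) (Fin n) F) (j : ℕ) :
    Matrix (Fin (j + 1) × Fin k) (Fin (j + 1) × Fin n) F :=
  Matrix.of fun p c => if (p.1 : ℕ) ≤ (c.1 : ℕ) then G ((c.1 : ℕ) - (p.1 : ℕ)) p.2 c.2 else 0

/-- The block diagonal matrix `diag(A*_0,…,A*_j)` with blocks `A*_t ∈ K^{n×ρ_t}`. -/
def blockDiag {K : Type*} [Field K] {n j : ℕ} {ρ : Fin (j + 1) → ℕ}
    (A : (t : Fin (j + 1)) → Matrix (Fin n) (Fin (ρ t)) K) :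
    Matrix (Fin (j + 1) × Fin n) ((t : Fin (j + 1)) × Fin (ρ t)) K :=
  Matrix.of fun p c => if p.1 = c.1 then A c.1 p.2 c.2 else 0

/-!
Every encoder satisfies `d_R(j) ≤ (n - k)(j + 1) + 1`: fix `k` columns `φ` on which `G_0` is
invertible and solve, one time step after the other, for a source sequence whose packets vanish
on these columns except for a single entry at time `0`.

Conversely, let `s₀ ≠ 0` and suppose the ranks `r_t` of the packets sum to at most
`(n - k)(j + 1)`. Then the spare dimensions `n - r_t` first add up to `k (τ + 1)` at some
`τ ≤ j`. Up to `τ` choose `ρ_t ≤ n - r_t` with prefix sums ending at `k (τ + 1)`, and let the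
columns of `A*_t` be independent `K`-linear relations among the entries of `x_t`. After `τ`,
change the source so that the packets vanish on the columns `φ`, and take `ρ_t = k`, with `A*_t`
again built from relations. The new source is nonzero and is annihilated by
`G^EX_j · diag(A*_0, …, A*_j)`, so that matrix is not invertible.
-/

open Finset

section Rank

variable {K F : Type*} [Field K] [Field F] [Algebra K F] {n : ℕ}

lemma vrank_le_sub_card_of_eq_zero (x : Fin n → F) (S : Finset (Fin n))
    (hx : ∀ i ∈ S, x i = 0) : vrank K x ≤ n - #S := by
  have hspan : Submodule.span K (Set.range x) ≤
      Submodule.span K (Set.range fun i : {i // i ∈ Sᶜ} => x i) := by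
    refine Submodule.span_le.2 ?_
    rintro _ ⟨i, rfl⟩
    by_cases hi : i ∈ S
    · simp [hx i hi]
    · exact Submodule.subset_span ⟨⟨i, by simpa using hi⟩, rfl⟩
  have := FiniteDimensional.span_of_finite K (Set.finite_range fun i : {i // i ∈ Sᶜ} => x i)
  calc vrank K x ≤ _ := Submodule.finrank_mono hspan
    _ ≤ Fintype.card {i // i ∈ Sᶜ} := finrank_range_le_card _
    _ = n - #S := by rw [Fintype.card_coe, card_compl, Fintype.card_fin]

lemma vrank_le (x : Fin n → F) : vrank K x ≤ n := by
  simpa using vrank_le_sub_card_of_eq_zero (K := K) x ∅ (by simp)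

lemma exists_rank_eq_vecMul_map_eq_zero {ρ : ℕ} (x : Fin n → F) (hρ : ρ + vrank K x ≤ n) :
    ∃ A : Matrix (Fin n) (Fin ρ) K, A.rank = ρ ∧ Matrix.vecMul x (A.map (algebraMap K F)) = 0 := by
  let f : (Fin n → K) →ₗ[K] F := Fintype.linearCombination K x
  have hker : ρ ≤ Module.finrank K (LinearMap.ker f) := by
    have := LinearMap.finrank_range_add_finrank_ker f
    rw [Fintype.range_linearCombination, Module.finrank_fin_fun] at this
    unfold vrank at hρ
    omega
  obtain ⟨b, hb⟩ := exists_linearIndependent_of_le_finrank hker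
  let B : Matrix (Fin ρ) (Fin n) K := Matrix.of fun l => (b l : Fin n → K)
  refine ⟨Bᵀ, ?_, ?_⟩
  · rw [Matrix.rank_transpose, LinearIndependent.rank_matrix, Fintype.card_fin]
    exact hb.map' _ (Submodule.ker_subtype _)
  · funext l
    have hl : f (b l) = 0 := (b l).2
    rw [Fintype.linearCombination_apply] at hl
    simpa [Matrix.vecMul, dotProduct, B, Algebra.smul_def, mul_comm] using hl

end Rank

lemma Matrix.exists_injective_isUnit_submatrix_of_rank_eq {R : Type*} [Field R] {k n : ℕ}
    (B : Matrix (Fin k) (Fin n) R) (hB : B.rank = k) :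
    ∃ φ : Fin k → Fin n, Function.Injective φ ∧ IsUnit (B.submatrix id φ) := by
  obtain ⟨κ, a, ha, hspan, hli⟩ := exists_linearIndependent' R B.col
  have : Finite κ := Finite.of_injective a ha
  have : Fintype κ := Fintype.ofFinite κ
  have hcard : Fintype.card κ = k := by
    rw [← finrank_span_eq_card hli, hspan, ← Matrix.rank_eq_finrank_span_cols, hB]
  let e : Fin k ≃ κ := (Fintype.equivFinOfCardEq hcard).symm
  refine ⟨a ∘ e, ha.comp e.injective, ?_⟩
  rw [← Matrix.linearIndependent_cols_iff_isUnit]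
  exact hli.comp e e.injective

section Packet

variable {F : Type*} [Field F] {k n : ℕ} (G : ℕ → Matrix (Fin k) (Fin n) F)

lemma packet_congr {s s' : ℕ → Fin k → F} {t : ℕ} (h : ∀ u ≤ t, s u = s' u) :
    packet G s t = packet G s' t :=
  sum_congr rfl fun i _ => by rw [h (t - i) (Nat.sub_le t i)]

lemma packet_add (s s' : ℕ → Fin k → F) (t : ℕ) :
    packet G (s + s') t = packet G s t + packet G s' t := by
  simp only [packet, Pi.add_apply, Matrix.add_vecMul, sum_add_distrib]

lemma packet_single_self (t : ℕ) (w : Fin k → F) :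
    packet G (Pi.single t w) t = Matrix.vecMul w (G 0) := by
  rw [packet, sum_eq_single 0]
  · simp
  · intro i hi hi0
    rw [Pi.single_eq_of_ne (by simp at hi; omega), Matrix.zero_vecMul]
  · simp

lemma packet_zero (s : ℕ → Fin k → F) : packet G s 0 = Matrix.vecMul (s 0) (G 0) := by
  simp [packet]

lemma exists_packet_apply_eq {φ : Fin k → Fin n} (hQ : IsUnit ((G 0).submatrix id φ))
    (s y : ℕ → Fin k → F) (τ T : ℕ) :
    ∃ s' : ℕ → Fin k → F, (∀ t < τ, s' t = s t) ∧
      ∀ t, τ ≤ t → t < T → ∀ l, packet G s' t (φ l) = y t l := by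
  induction T with
  | zero => exact ⟨s, fun _ _ => rfl, fun t _ ht => absurd ht (Nat.not_lt_zero t)⟩
  | succ T ih =>
    obtain ⟨s', hs's, hs'y⟩ := ih
    by_cases hT : T < τ
    · exact ⟨s', hs's, fun t hτt htT => hs'y t hτt (by omega)⟩
    obtain ⟨w, hw⟩ := Matrix.vecMul_surjective_iff_isUnit.2 hQ
      (y T - fun l => packet G s' T (φ l))
    refine ⟨s' + Pi.single T w, fun t ht => ?_, fun t hτt htT l => ?_⟩
    · simp [Pi.single_eq_of_ne (show t ≠ T by omega), hs's t ht]
    obtain htT | rfl : t < T ∨ t = T := by omega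
    · rw [packet_congr G (s' := s') fun u hu => by simp [Pi.single_eq_of_ne (show u ≠ T by omega)]]
      exact hs'y t hτt htT l
    · have hwl := congrFun hw l
      rw [Pi.sub_apply] at hwl
      rw [packet_add, packet_single_self, Pi.add_apply, ← eq_sub_iff_add_eq', ← hwl]
      rfl

end Packet

lemma Fin.sum_filter_le_eq_sum_range {M : Type*} [AddCommMonoid M] {j : ℕ} (t : Fin (j + 1))
    (f : ℕ → M) : ∑ i ∈ univ.filter (· ≤ t), f i = ∑ i ∈ range (t + 1), f i := by
  refine (sum_map _ Fin.valEmbedding f).symm.trans (congrArg (Finset.sum · f) ?_)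
  ext u
  simp only [mem_map, mem_filter, mem_univ, true_and, Fin.valEmbedding_apply, mem_range]
  exact ⟨fun ⟨i, hi, hiu⟩ => by rw [Fin.le_def] at hi; omega,
    fun hu => ⟨⟨u, by omega⟩, by rw [Fin.le_def]; simp; omega, rfl⟩⟩

section Generator

variable {K F : Type*} [Field K] [Field F] [Algebra K F] {k n : ℕ}
  (G : ℕ → Matrix (Fin k) (Fin n) F)

lemma vecMul_GEX_apply {j : ℕ} (s : ℕ → Fin k → F) (t : Fin (j + 1)) (c : Fin n) :
    Matrix.vecMul (fun p => s p.1 p.2) (GEX G j) (t, c) = packet G s t c := by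
  have hrow : ∀ u : Fin (j + 1), ∑ a, s u a * GEX G j (u, a) (t, c) =
      if u ≤ t then Matrix.vecMul (s u) (G (t - u)) c else 0 := by
    intro u
    split_ifs with hu <;> simp [GEX, Matrix.vecMul, dotProduct, hu]
  rw [Matrix.vecMul, dotProduct, Fintype.sum_prod_type]
  simp only [hrow]
  rw [← sum_filter, Fin.sum_filter_le_eq_sum_range t fun u => Matrix.vecMul (s u) (G (t - u)) c,
    packet, Finset.sum_apply, ← sum_range_reflect]
  refine sum_congr rfl fun i hi => ?_
  rw [Nat.add_sub_cancel, Nat.sub_sub_self (by simp at hi; omega)]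

lemma vecMul_GEX_mul_blockDiag_apply {j : ℕ} {ρ : Fin (j + 1) → ℕ}
    (A : (t : Fin (j + 1)) → Matrix (Fin n) (Fin (ρ t)) K) (s : ℕ → Fin k → F)
    (t : Fin (j + 1)) (l : Fin (ρ t)) :
    Matrix.vecMul (fun p => s p.1 p.2) (GEX G j * (blockDiag A).map (algebraMap K F)) ⟨t, l⟩ =
      Matrix.vecMul (packet G s t) ((A t).map (algebraMap K F)) l := by
  rw [← Matrix.vecMul_vecMul, Matrix.vecMul, dotProduct, Fintype.sum_prod_type, sum_eq_single t]
  · simp only [vecMul_GEX_apply]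
    simp [_root_.blockDiag, Matrix.vecMul, dotProduct]
  · intro u _ hu
    simp [_root_.blockDiag, hu]
  · simp

end Generator

lemma exists_profile_of_first_reach {k τ : ℕ} {c : ℕ → ℕ}
    (hbelow : ∀ u < τ, ∑ i ∈ range (u + 1), c i < k * (u + 1))
    (hreach : k * (τ + 1) ≤ ∑ i ∈ range (τ + 1), c i) :
    ∃ ρ : ℕ → ℕ, (∀ t ≤ τ, ρ t ≤ c t) ∧ (∀ t, τ < t → ρ t = k) ∧
      (∀ t, ∑ i ∈ range (t + 1), ρ i ≤ k * (t + 1)) ∧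
      ∀ t, τ ≤ t → ∑ i ∈ range (t + 1), ρ i = k * (t + 1) := by
  have hbefore : ∑ i ∈ range τ, c i ≤ k * τ := by
    rcases τ with _ | u
    · simp
    · exact (hbelow u u.lt_succ_self).le
  set ρ : ℕ → ℕ := fun t =>
    if t < τ then c t else if t = τ then k * (τ + 1) - ∑ i ∈ range τ, c i else k with hρ
  have hprefix : ∀ t, ∑ i ∈ range (t + 1), ρ i =
      if t < τ then ∑ i ∈ range (t + 1), c i else k * (t + 1) := by
    intro t
    induction t with
    | zero => rcases τ with _ | u <;> simp [hρ]
    | succ t ih =>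
      rw [sum_range_succ, ih]
      obtain ht | ht | ht : t + 1 < τ ∨ t + 1 = τ ∨ τ < t + 1 := by omega
      · simp [hρ, ht, show t < τ by omega, sum_range_succ]
      · subst ht
        simp only [hρ, lt_add_one, lt_irrefl, if_true, if_false]
        have := mul_add_one k (t + 1)
        omega
      · simp only [hρ, show ¬ t + 1 < τ by omega, show ¬ t < τ by omega,
          show t + 1 ≠ τ by omega, if_false]
        ring
  refine ⟨ρ, fun t ht => ?_, fun t ht => ?_, fun t => ?_, fun t ht => ?_⟩
  · simp only [hρ]
    split_ifs with h1 h2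
    · exact le_rfl
    · subst h2
      rw [sum_range_succ] at hreach
      omega
    · omega
  · simp [hρ, show ¬ t < τ by omega, show t ≠ τ by omega]
  · rw [hprefix]
    split_ifs with ht
    · exact (hbelow t ht).le
    · exact le_rfl
  · rw [hprefix, if_neg (by omega)]

structure IsAdmissibleProfile (k n j : ℕ) (ρ : Fin (j + 1) → ℕ) : Prop where
  le : ∀ t, ρ t ≤ n
  sum_filter_le : ∀ t : Fin (j + 1), ∑ i ∈ univ.filter (· ≤ t), ρ i ≤ k * ((t : ℕ) + 1)
  sum_eq : ∑ t, ρ t = k * (j + 1)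

lemma isAdmissibleProfile_of_sum_range {k n j : ℕ} {ρ : ℕ → ℕ} (hle : ∀ t ≤ j, ρ t ≤ n)
    (hsum_le : ∀ t, ∑ i ∈ range (t + 1), ρ i ≤ k * (t + 1))
    (hsum : ∑ i ∈ range (j + 1), ρ i = k * (j + 1)) :
    IsAdmissibleProfile k n j fun t => ρ t where
  le t := hle t (Nat.lt_succ_iff.1 t.2)
  sum_filter_le t := (Fin.sum_filter_le_eq_sum_range t ρ).trans_le (hsum_le t)
  sum_eq := (Fin.sum_univ_eq_sum_range ρ (j + 1)).trans hsum

section ColumnSumRank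

variable {K F : Type*} [Field K] [Field F] [Algebra K F] {k n : ℕ}
  {G : ℕ → Matrix (Fin k) (Fin n) F} {φ : Fin k → Fin n}

lemma exists_sum_vrank_packet_le (hk : 1 ≤ k) (hφ : Function.Injective φ)
    (hQ : IsUnit ((G 0).submatrix id φ)) (j : ℕ) :
    ∃ s : ℕ → Fin k → F, s 0 ≠ 0 ∧
      ∑ t ∈ range (j + 1), vrank K (packet G s t) ≤ (n - k) * (j + 1) + 1 := by
  let l₀ : Fin k := ⟨0, hk⟩
  obtain ⟨s, -, hs⟩ := exists_packet_apply_eq G hQ 0 (Pi.single 0 (Pi.single l₀ 1)) 0 (j + 1)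
  have hs0 : s 0 ≠ 0 := by
    intro h0
    simpa [packet_zero, h0] using hs 0 le_rfl (Nat.succ_pos j) l₀
  have hzero : ∀ t ≤ j, ∀ l, (t, l) ≠ (0, l₀) → packet G s t (φ l) = 0 := by
    intro t ht l htl
    rw [hs t (Nat.zero_le t) (Nat.lt_succ_of_le ht) l]
    by_cases ht0 : t = 0
    · subst ht0
      simp [show l ≠ l₀ by simpa using htl]
    · simp [Pi.single_eq_of_ne ht0]
  have hfirst : vrank K (packet G s 0) ≤ n - k + 1 := by
    have := vrank_le_sub_card_of_eq_zero (K := K) (packet G s 0) ((univ.erase l₀).map ⟨φ, hφ⟩)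
      fun i hi => by
        obtain ⟨l, hl, rfl⟩ := mem_map.1 hi
        exact hzero 0 (Nat.zero_le j) l (by simpa using (mem_erase.1 hl).1)
    simp only [card_map, card_erase_of_mem (mem_univ _), card_univ, Fintype.card_fin] at this
    omega
  have hlater : ∀ t ∈ range j, vrank K (packet G s (t + 1)) ≤ n - k := by
    intro t ht
    have := vrank_le_sub_card_of_eq_zero (K := K) (packet G s (t + 1)) (univ.map ⟨φ, hφ⟩)
      (by simpa using fun l => hzero (t + 1) (by simpa using ht) l (by simp))
    simpa using this
  refine ⟨s, hs0, ?_⟩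
  calc ∑ t ∈ range (j + 1), vrank K (packet G s t)
      = ∑ t ∈ range j, vrank K (packet G s (t + 1)) + vrank K (packet G s 0) := sum_range_succ' _ _
    _ ≤ j * (n - k) + (n - k + 1) := by
        gcongr
        simpa using sum_le_sum hlater
    _ = (n - k) * (j + 1) + 1 := by ring

lemma lt_sum_vrank_packet (hkn : k ≤ n) (hφ : Function.Injective φ)
    (hQ : IsUnit ((G 0).submatrix id φ)) {j : ℕ}
    (h : ∀ ρ, IsAdmissibleProfile k n j ρ → ∀ A : (t : Fin (j + 1)) → Matrix (Fin n) (Fin (ρ t)) K,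
      (∀ t, (A t).rank = ρ t) → Function.Injective fun v : Fin (j + 1) × Fin k → F =>
        Matrix.vecMul v (GEX G j * (blockDiag A).map (algebraMap K F)))
    {s : ℕ → Fin k → F} (hs0 : s 0 ≠ 0) :
    (n - k) * (j + 1) < ∑ t ∈ range (j + 1), vrank K (packet G s t) := by
  by_contra! hle
  let c : ℕ → ℕ := fun t => n - vrank K (packet G s t)
  have hreach_j : k * (j + 1) ≤ ∑ i ∈ range (j + 1), c i := by
    have hsplit : ∑ i ∈ range (j + 1), c i + ∑ i ∈ range (j + 1), vrank K (packet G s i) =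
        n * (j + 1) := by
      rw [← sum_add_distrib, sum_congr rfl fun i _ => Nat.sub_add_cancel (vrank_le _)]
      simp [mul_comm]
    have := Nat.sub_mul n k (j + 1)
    have := Nat.mul_le_mul_right (j + 1) hkn
    omega
  have hreach : ∃ τ, k * (τ + 1) ≤ ∑ i ∈ range (τ + 1), c i := ⟨j, hreach_j⟩
  classical
  let τ := Nat.find hreach
  have hτj : τ ≤ j := Nat.find_min' hreach hreach_j
  obtain ⟨ρ, hρc, hρk, hρ_le, hρ_eq⟩ := exists_profile_of_first_reach
    (fun u hu => not_le.1 (Nat.find_min hreach hu)) (Nat.find_spec hreach)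
  obtain ⟨s', hs's, hs'φ⟩ := exists_packet_apply_eq G hQ s 0 (τ + 1) (j + 1)
  have hρrank : ∀ t ≤ j, ρ t + vrank K (packet G s' t) ≤ n := by
    intro t ht
    rcases le_or_gt t τ with htτ | htτ
    · rw [packet_congr G fun u hu => hs's u (by omega)]
      have : ρ t ≤ n - vrank K (packet G s t) := hρc t htτ
      have := vrank_le (K := K) (packet G s t)
      omega
    · have := vrank_le_sub_card_of_eq_zero (K := K) (packet G s' t) (univ.map ⟨φ, hφ⟩)
        (by simpa using hs'φ t htτ (by omega))
      simp only [card_map, card_univ, Fintype.card_fin] at this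
      rw [hρk t htτ]
      omega
  choose A hA hAx using fun t : Fin (j + 1) =>
    exists_rank_eq_vecMul_map_eq_zero (packet G s' t) (hρrank t (Nat.lt_succ_iff.1 t.2))
  have hadm : IsAdmissibleProfile k n j fun t => ρ t :=
    isAdmissibleProfile_of_sum_range (fun t ht => by have := hρrank t ht; omega) hρ_le
      (hρ_eq j hτj)
  have hv : (fun p : Fin (j + 1) × Fin k => s' p.1 p.2) = 0 := h _ hadm A hA <| by
    funext ⟨t, l⟩
    dsimp only
    rw [Matrix.zero_vecMul, vecMul_GEX_mul_blockDiag_apply, hAx]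
    rfl
  exact hs0 <| funext fun a => by
    simpa [← hs's 0 (Nat.succ_pos τ)] using congrFun hv (0, a)

end ColumnSumRank

theorem stmt5_general (k n : ℕ)
    (K F : Type*) [Field K] [Field F] [Algebra K F]
    (hk : 1 ≤ k) (hkn : k < n)
    (G : ℕ → Matrix (Fin k) (Fin n) F)
    (hG0 : (G 0).rank = k)
    (j : ℕ)
    (h : ∀ ρ : Fin (j + 1) → ℕ, (∀ t, ρ t ≤ n) →
      (∀ t : Fin (j + 1), ∑ i ∈ Finset.univ.filter (· ≤ t), ρ i ≤ k * ((t : ℕ) + 1)) →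
      (∑ t, ρ t = k * (j + 1)) →
      ∀ A : (t : Fin (j + 1)) → Matrix (Fin n) (Fin (ρ t)) K,
        (∀ t, (A t).rank = ρ t) →
        Function.Bijective fun v : Fin (j + 1) × Fin k → F =>
          Matrix.vecMul v (GEX G j * (blockDiag A).map (algebraMap K F))) :
    dR K G j = (n - k) * (j + 1) + 1 := by
  obtain ⟨φ, hφ, hQ⟩ := (G 0).exists_injective_isUnit_submatrix_of_rank_eq hG0
  obtain ⟨s, hs0, hs⟩ := exists_sum_vrank_packet_le (K := K) hk hφ hQ j
  have hwitness : _ ∈ {d | ∃ s : ℕ → Fin k → F, s 0 ≠ 0 ∧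
      d = ∑ t ∈ range (j + 1), vrank K (packet G s t)} := ⟨s, hs0, rfl⟩
  refine le_antisymm ((Nat.sInf_le hwitness).trans hs) ?_
  obtain ⟨s', hs'0, hdR⟩ := Nat.sInf_mem ⟨_, hwitness⟩
  rw [dR, hdR]
  exact lt_sum_vrank_packet hkn.le hφ hQ
    (fun ρ hρ A hA => (h ρ hρ.le hρ.sum_filter_le hρ.sum_eq A hA).injective) hs'0

/-- Theorem 3, 2 ⇒ 1: if for every admissible choice of `ρ` and full-rank
`A*_t` the matrix `G^EX_j · diag(A*_0,…,A*_j)` is invertible, then `d_R(j)` attains the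
Singleton bound `(n−k)(j+1)+1`. -/
theorem stmt5 (q M k n m : ℕ) (hq : IsPrimePow q)
    (K F : Type*) [Field K] [Fintype K] [Field F] [Algebra K F]
    (hK : Fintype.card K = q) (hM : Module.finrank K F = M)
    (hk : 1 ≤ k) (hkn : k < n)
    (G : ℕ → Matrix (Fin k) (Fin n) F)
    (hG0 : (G 0).rank = k) (hGz : ∀ i, m < i → G i = 0)
    (j : ℕ)
    (h : ∀ ρ : Fin (j + 1) → ℕ, (∀ t, ρ t ≤ n) →
      (∀ t : Fin (j + 1), ∑ i ∈ Finset.univ.filter (· ≤ t), ρ i ≤ k * ((t : ℕ) + 1)) →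
      (∑ t, ρ t = k * (j + 1)) →
      ∀ A : (t : Fin (j + 1)) → Matrix (Fin n) (Fin (ρ t)) K,
        (∀ t, (A t).rank = ρ t) →
        Function.Bijective fun v : Fin (j + 1) × Fin k → F =>
          Matrix.vecMul v (GEX G j * (blockDiag A).map (algebraMap K F))) :
    dR K G j = (n - k) * (j + 1) + 1 :=
  stmt5_general k n K F hk hkn G hG0 j h
end

section
/- (Theorem 1, Gabidulin.) Let 1 ≤ k ≤ n ≤ M and let G ∈ F^{k×n} be the generator matrix of a maximum rank distance code, i.e. rank(s·G) ≥ n−k+1 for every nonzero row vector s ∈ F^k. Then for every matrix A ∈ K^{n×k} of rank k, the k×k matrix G·A over F (A regarded over F via the inclusion K ⊆ F) is invertible. -/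
open Matrix

/-
If `y ∈ F^n` annihilates the columns of `A ∈ K^{n×m}`, then the `K`-linear map
`K^n → F, c ↦ ∑ cᵢ yᵢ` (whose image is the `K`-span of the entries of `y`) kills the column
space of `A`; rank–nullity then bounds `rank y + rank A` by `n`. For `G·A` singular, a nonzero
`s` with `s·G·A = 0` produces the codeword `y = s·G` of rank at most `n − rank A = n − k`,
contradicting the MRD bound `n − k + 1`.
-/

section

variable {K F : Type*} [Field K] [Field F] [Algebra K F] {n : ℕ} {m : Type*} [Fintype m]

theorem range_mulVecLin_le_ker_linearCombination {y : Fin n → F} {A : Matrix (Fin n) m K}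
    (hyA : y ᵥ* A.map (algebraMap K F) = 0) :
    LinearMap.range A.mulVecLin ≤ LinearMap.ker (Fintype.linearCombination K y) := by
  rw [Matrix.range_mulVecLin, Submodule.span_le]
  rintro _ ⟨j, rfl⟩
  simpa [Matrix.vecMul, dotProduct, Fintype.linearCombination_apply, Algebra.smul_def,
    mul_comm] using congrFun hyA j

theorem vrank_add_rank_le_of_vecMul_eq_zero {y : Fin n → F} {A : Matrix (Fin n) m K}
    (hyA : y ᵥ* A.map (algebraMap K F) = 0) : vrank K y + A.rank ≤ n := by
  have hker : A.rank ≤ Module.finrank K (LinearMap.ker (Fintype.linearCombination K y)) :=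
    Submodule.finrank_mono (range_mulVecLin_le_ker_linearCombination hyA)
  have hrank_nullity := LinearMap.finrank_range_add_finrank_ker (Fintype.linearCombination K y)
  rw [Fintype.range_linearCombination, Module.finrank_fin_fun] at hrank_nullity
  unfold vrank
  omega

end

theorem stmt8_general (k n : ℕ)
    (K F : Type*) [Field K] [Field F] [Algebra K F]
    (G : Matrix (Fin k) (Fin n) F)
    (hG : ∀ s : Fin k → F, s ≠ 0 → n - k + 1 ≤ vrank K (Matrix.vecMul s G)) :
    ∀ A : Matrix (Fin n) (Fin k) K, A.rank = k →
      IsUnit (G * A.map (algebraMap K F)).det := by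
  intro A hA
  rw [isUnit_iff_ne_zero]
  intro hdet
  obtain ⟨s, hs, hsGA⟩ := Matrix.exists_vecMul_eq_zero_iff.mpr hdet
  have hbound := vrank_add_rank_le_of_vecMul_eq_zero (y := s ᵥ* G) (A := A)
    (by rw [Matrix.vecMul_vecMul, hsGA])
  have hmrd := hG s hs
  omega

/-- Theorem 1, Gabidulin: if `G` generates a maximum rank distance code
(`rank(s·G) ≥ n−k+1` for all nonzero `s`), then `G·A` is invertible for every full-rank
`A ∈ K^{n×k}`. -/
theorem stmt8 (q M k n : ℕ) (hq : IsPrimePow q)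
    (K F : Type*) [Field K] [Fintype K] [Field F] [Algebra K F]
    (hK : Fintype.card K = q) (hM : Module.finrank K F = M)
    (hk : 1 ≤ k) (hkn : k ≤ n) (hnM : n ≤ M)
    (G : Matrix (Fin k) (Fin n) F)
    (hG : ∀ s : Fin k → F, s ≠ 0 → n - k + 1 ≤ vrank K (Matrix.vecMul s G)) :
    ∀ A : Matrix (Fin n) (Fin k) K, A.rank = k →
      IsUnit (G * A.map (algebraMap K F)).det :=
  stmt8_general k n K F G hG
end
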